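/- For every set S ⊆ ℝ of nonnegative reals, the class of all finite convexly ordered ultrametric spaces whose set of realized distances is contained in S has the Ramsey property: for every integer k ≥ 2 and all such spaces U and V with U embeddable into V, there exists a finite convexly ordered ultrametric space W with all distances in S such that for every k-coloring of the set of embeddings of U into W there exist an embedding w : V ↪ W and a color i such that w ∘ g has color i for every embedding g : U ↪ V. -/

import Mathlib

/-- A finite convexly ordered ultrametric space: a finite set `U` with an ultrametric `dist`
(a metric satisfying `d(x,z) ≤ max (d(x,y)) (d(y,z))`) and a (strict) linear order `lt` such
that every closed ball is convex with respect to `lt`. -/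
structure ConvOrdUltra where
  U : Type
  finite : Finite U
  dist : U → U → ℝ
  dist_self : ∀ x, dist x x = 0
  eq_of_dist_eq_zero : ∀ x y, dist x y = 0 → x = y
  dist_comm : ∀ x y, dist x y = dist y x
  ultra : ∀ x y z, dist x z ≤ max (dist x y) (dist y z)
  lt : U → U → Prop
  lt_irrefl : ∀ x, ¬ lt x x
  lt_trans : ∀ x y z, lt x y → lt y z → lt x z
  lt_total : ∀ x y, lt x y ∨ x = y ∨ lt y x
  convex : ∀ u r x y z, dist u x ≤ r → dist u y ≤ r → lt x z → lt z y → dist u z ≤ r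

/-- An embedding of convexly ordered ultrametric spaces: an injective map preserving
distances and the linear orders. -/
def ConvOrdUltra.Emb (X Y : ConvOrdUltra) (f : X.U → Y.U) : Prop :=
  Function.Injective f ∧
  (∀ a b, Y.dist (f a) (f b) = X.dist a b) ∧
  (∀ a b, X.lt a b → Y.lt (f a) (f b))


/-! Let `s₀ > ⋯ > s_{m-1}` be the nonzero distances of `Y`. By convexity, the open `s`-balls of a
finite convexly ordered ultrametric space are consecutive intervals, so they form a finite linear
order (represented by their least points), and an embedding `X → Y` induces order embeddings
between the linear orders of `s`-balls of `X` and of `Y`. Once the `s_j`-balls of `Y` are placed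
in `Fin N` by order embeddings, recording the ball of each point at every level embeds `Y` into
the words of length `m` over `Fin N`, ordered lexicographically, with distance `s_j` between words
first differing at letter `j`. Colour a tuple of order embeddings of the ball orders of `X` into
`Fin N` by the colour of the copy of `X` it spells out: the product Ramsey theorem for order
embeddings of finite linear orders gives placements of the balls of `Y` for which every copy of
`X` inside the resulting copy of `Y` has the same colour. -/

open Finset
open scoped NNReal

namespace Fin

def consZeroOrderEmb {a b : ℕ} (f : Fin a ↪o Fin b) : Fin (a + 1) ↪o Fin (b + 1) :=
  OrderEmbedding.ofStrictMono (Fin.cons 0 (Fin.succ ∘ f)) <| by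
    intro x y hxy
    cases x using Fin.cases <;> cases y using Fin.cases
    · exact absurd hxy (lt_irrefl _)
    · simp
    · exact absurd hxy (Fin.not_lt_zero _)
    · simpa using hxy

@[simp] lemma consZeroOrderEmb_zero {a b : ℕ} (f : Fin a ↪o Fin b) :
    consZeroOrderEmb f 0 = 0 := rfl

@[simp] lemma consZeroOrderEmb_succ {a b : ℕ} (f : Fin a ↪o Fin b) (i : Fin a) :
    consZeroOrderEmb f i.succ = (f i).succ := rfl

lemma consZeroOrderEmb_trans {a b c : ℕ} (f : Fin a ↪o Fin b) (g : Fin b ↪o Fin c) :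
    (consZeroOrderEmb f).trans (consZeroOrderEmb g) = consZeroOrderEmb (f.trans g) := by
  ext i
  cases i using Fin.cases <;> simp

lemma exists_eq_trans_succOrderEmb {α : Type*} [LinearOrder α] {n : ℕ} (g : α ↪o Fin (n + 1))
    (hg : ∀ a, g a ≠ 0) : ∃ g' : α ↪o Fin n, g = g'.trans (succOrderEmb n) :=
  ⟨.ofStrictMono (fun a => (g a).pred (hg a)) fun a b hab => by simpa using g.strictMono hab,
    DFunLike.ext _ _ fun a => (Fin.succ_pred _ (hg a)).symm⟩

lemma exists_eq_consZeroOrderEmb {a b : ℕ} (g : Fin (a + 1) ↪o Fin (b + 1)) (hg : g 0 = 0) :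
    ∃ g' : Fin a ↪o Fin b, g = consZeroOrderEmb g' := by
  obtain ⟨g', hg'⟩ := exists_eq_trans_succOrderEmb ((succOrderEmb a).trans g) fun i => by
    simp [← hg]
  refine ⟨g', ?_⟩
  ext i
  cases i using Fin.cases with
  | zero => simp [hg]
  | succ i => simpa using congrArg Fin.val (DFunLike.congr_fun hg' i)

end Fin

instance OrderEmbedding.finite {α β : Type*} [LE α] [LE β] [Finite β] : Finite (α ↪o β) :=
  Finite.of_injective _ RelEmbedding.toEmbedding_injective

section Ramsey

variable (κ : Type*)

lemma exists_endHomogeneous_fin {r : ℕ}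
    (hr : ∀ L, ∃ N, ∀ χ : (Fin r ↪o Fin N) → κ,
      ∃ (H : Fin L ↪o Fin N) (i : κ), ∀ g : Fin r ↪o Fin L, χ (g.trans H) = i)
    (T : ℕ) : ∃ N, ∀ χ : (Fin (r + 1) ↪o Fin N) → κ, ∃ (a : Fin T ↪o Fin N) (c : Fin T → κ),
      ∀ g : Fin (r + 1) ↪o Fin T, χ (g.trans a) = c (g 0) := by
  induction T with
  | zero => exact ⟨0, fun _ => ⟨OrderEmbedding.ofIsEmpty, Fin.elim0, fun g => (g 0).elim0⟩⟩
  | succ T ih =>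
    obtain ⟨N', hN'⟩ := ih
    obtain ⟨N, hN⟩ := hr N'
    refine ⟨N + 1, fun χ => ?_⟩
    -- on `M` the colour of a set with least point `0` is `c₀`; the remaining points go in `M`
    obtain ⟨M, c₀, hM⟩ := hN fun h => χ (Fin.consZeroOrderEmb h)
    obtain ⟨a, c, ha⟩ := hN' fun h => χ (h.trans (M.trans (Fin.succOrderEmb N)))
    refine ⟨Fin.consZeroOrderEmb (a.trans M), Fin.cons c₀ c, fun g => ?_⟩
    by_cases hg : g 0 = 0
    · obtain ⟨g', rfl⟩ := Fin.exists_eq_consZeroOrderEmb g hg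
      rw [Fin.consZeroOrderEmb_trans, hg]
      exact hM (g'.trans a)
    · obtain ⟨g', rfl⟩ := Fin.exists_eq_trans_succOrderEmb g fun i hi =>
        hg (Fin.le_zero_iff.mp (hi ▸ g.monotone (Fin.zero_le i)))
      calc χ ((g'.trans (Fin.succOrderEmb T)).trans (Fin.consZeroOrderEmb (a.trans M)))
          = χ ((g'.trans a).trans (M.trans (Fin.succOrderEmb N))) := congrArg χ (by ext; simp)
        _ = c (g' 0) := ha g'

variable [Finite κ]

theorem exists_ramsey_fin (r L : ℕ) :
    ∃ N, ∀ χ : (Fin r ↪o Fin N) → κ,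
      ∃ (H : Fin L ↪o Fin N) (i : κ), ∀ g : Fin r ↪o Fin L, χ (g.trans H) = i := by
  induction r generalizing L with
  | zero =>
    exact ⟨L, fun χ => ⟨RelEmbedding.refl _, χ .ofIsEmpty, fun g =>
      congrArg χ (DFunLike.ext _ _ fun i => i.elim0)⟩⟩
  | succ r ih =>
    classical
    have := Fintype.ofFinite κ
    obtain ⟨N, hN⟩ := exists_endHomogeneous_fin κ ih (Fintype.card κ * L + 1)
    refine ⟨N, fun χ => ?_⟩
    obtain ⟨a, c, ha⟩ := hN χ
    obtain ⟨i, hi⟩ := Fintype.exists_lt_card_fiber_of_mul_lt_card c (n := L) (by simp)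
    obtain ⟨F, hF, hFcard⟩ := Finset.exists_subset_card_eq hi.le
    refine ⟨(F.orderEmbOfFin hFcard).trans a, i, fun g => ?_⟩
    calc χ (g.trans ((F.orderEmbOfFin hFcard).trans a))
        = c (F.orderEmbOfFin hFcard (g 0)) := ha (g.trans (F.orderEmbOfFin hFcard))
      _ = i := (Finset.mem_filter.mp (hF (F.orderEmbOfFin_mem hFcard _))).2

theorem exists_ramsey_orderEmbedding (A B : Type*) [LinearOrder A] [Finite A] [LinearOrder B]
    [Finite B] : ∃ N, ∀ χ : (A ↪o Fin N) → κ,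
      ∃ (H : B ↪o Fin N) (i : κ), ∀ g : A ↪o B, χ (g.trans H) = i := by
  have := Fintype.ofFinite A
  have := Fintype.ofFinite B
  let eA := Fintype.orderIsoFinOfCardEq A rfl
  let eB := Fintype.orderIsoFinOfCardEq B rfl
  obtain ⟨N, hN⟩ := exists_ramsey_fin κ (Fintype.card A) (Fintype.card B)
  refine ⟨N, fun χ => ?_⟩
  obtain ⟨H, i, hH⟩ := hN fun h => χ (eA.symm.toOrderEmbedding.trans h)
  refine ⟨eB.symm.toOrderEmbedding.trans H, i, fun g => ?_⟩
  convert hH ((eA.toOrderEmbedding.trans g).trans eB.symm.toOrderEmbedding) using 2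
  ext a
  simp

theorem exists_pi_ramsey_orderEmbedding {m : ℕ} (A B : Fin m → Type*) [∀ j, LinearOrder (A j)]
    [∀ j, Finite (A j)] [∀ j, LinearOrder (B j)] [∀ j, Finite (B j)] :
    ∃ N, ∀ χ : ((j : Fin m) → A j ↪o Fin N) → κ, ∃ (H : (j : Fin m) → B j ↪o Fin N) (i : κ),
      ∀ g : (j : Fin m) → A j ↪o B j, χ (fun j => (g j).trans (H j)) = i := by
  induction m with
  | zero =>
    exact ⟨0, fun χ => ⟨fun j => j.elim0, χ fun j => j.elim0, fun _ =>
      congrArg χ (funext fun j => j.elim0)⟩⟩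
  | succ m ih =>
    obtain ⟨N', hN'⟩ := ih (fun j => A j.succ) (fun j => B j.succ)
    -- colour the first coordinate by the colouring it induces on the remaining coordinates
    obtain ⟨N₀, hN₀⟩ :=
      exists_ramsey_orderEmbedding (((j : Fin m) → A j.succ ↪o Fin N') → κ) (A 0) (B 0)
    let c₀ := Fin.castLEOrderEmb (le_max_left N₀ N')
    let c' := Fin.castLEOrderEmb (le_max_right N₀ N')
    refine ⟨max N₀ N', fun χ => ?_⟩
    obtain ⟨H₀, χ', hH₀⟩ := hN₀ fun h₀ h' =>
      χ (Fin.cons (h₀.trans c₀) fun j => (h' j).trans c')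
    obtain ⟨H', i, hH'⟩ := hN' χ'
    refine ⟨Fin.cons (H₀.trans c₀) fun j => (H' j).trans c', i, fun g => ?_⟩
    rw [← hH' fun j => g j.succ, ← hH₀ (g 0)]
    congr 1
    ext j : 1
    cases j using Fin.cases <;> rfl

end Ramsey

theorem Pi.Lex.apply_eq_of_lt_of_lt {ι : Type*} [LinearOrder ι] [WellFoundedLT ι]
    {β : ι → Type*} [∀ i, LinearOrder (β i)] {x y z : Lex (∀ i, β i)} (hxz : x < z) (hzy : z < y)
    {i : ι} (h : ∀ j ≤ i, x j = y j) : z i = x i := by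
  induction i using WellFoundedLT.induction with
  | _ i ih =>
  have below : ∀ j < i, z j = x j := fun j hj => ih j hj fun j' hj' => h j' (hj'.trans hj.le)
  -- otherwise `i` is the first letter at which `z` differs from `x` and `y`, so
  -- `x < z` forces `x i < z i` and `z < y` forces `z i < y i = x i`
  by_contra hne
  obtain ⟨a, ha, hxa⟩ := hxz
  obtain ⟨b, hb, hzb⟩ := hzy
  have hai : a = i := by
    rcases lt_trichotomy a i with hai | rfl | hia
    · exact absurd (below a hai) hxa.ne'
    · rfl
    · exact absurd (ha i hia).symm hne
  have hbi : b = i := by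
    rcases lt_trichotomy b i with hbi | rfl | hib
    · exact absurd ((below b hbi).trans (h b hbi.le)) hzb.ne
    · rfl
    · exact absurd ((hb i hib).trans (h i le_rfl).symm) hne
  rw [hai] at hxa
  rw [hbi, ← h i le_rfl] at hzb
  exact (hxa.trans hzb).false

namespace ConvOrdUltra

variable (Z : ConvOrdUltra)

lemma dist_nonneg (x y : Z.U) : 0 ≤ Z.dist x y := by
  have := Z.ultra x y x
  rwa [Z.dist_self, Z.dist_comm y x, max_self] at this

instance : IsStrictTotalOrder Z.U Z.lt where
  irrefl := Z.lt_irrefl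
  trans := Z.lt_trans
  trichotomous x y hxy hyx := (Z.lt_total x y).resolve_left hxy |>.resolve_right hyx

noncomputable instance : LinearOrder Z.U := by
  classical exact linearOrderOfSTO Z.lt

noncomputable instance : Fintype Z.U := @Fintype.ofFinite _ Z.finite

variable {Z}

section Balls

variable {s : ℝ}

lemma dist_lt_of_lt_of_lt {u x y z : Z.U} (hx : Z.dist u x < s) (hy : Z.dist u y < s)
    (hxz : x < z) (hzy : z < y) : Z.dist u z < s :=
  (Z.convex u _ x y z (le_max_left _ _) (le_max_right _ _) hxz hzy).trans_lt (max_lt hx hy)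

lemma dist_lt_iff_of_dist_lt {x y : Z.U} (h : Z.dist x y < s) (z : Z.U) :
    Z.dist x z < s ↔ Z.dist y z < s :=
  ⟨fun hx => (Z.ultra y x z).trans_lt (max_lt (Z.dist_comm y x ▸ h) hx),
    fun hy => (Z.ultra x y z).trans_lt (max_lt h hy)⟩

variable (Z) in
noncomputable def ballMin (s : ℝ) (hs : 0 < s) (x : Z.U) : Z.U :=
  (univ.filter (Z.dist x · < s)).min' ⟨x, by simp [Z.dist_self, hs]⟩

variable (hs : 0 < s)

lemma dist_ballMin_lt (x : Z.U) : Z.dist x (Z.ballMin s hs x) < s :=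
  (mem_filter.mp (min'_mem (univ.filter (Z.dist x · < s)) _)).2

lemma ballMin_le (x : Z.U) : Z.ballMin s hs x ≤ x :=
  min'_le _ _ (by simp [Z.dist_self, hs])

lemma ballMin_eq_iff {x y : Z.U} : Z.ballMin s hs x = Z.ballMin s hs y ↔ Z.dist x y < s := by
  refine ⟨fun h => (Z.ultra x (Z.ballMin s hs x) y).trans_lt (max_lt (dist_ballMin_lt hs x) ?_),
    fun h => ?_⟩
  · rw [h, Z.dist_comm]
    exact dist_ballMin_lt hs y
  · unfold ballMin
    congr 1
    ext z
    simpa using dist_lt_iff_of_dist_lt h z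

lemma ballMin_eq_self {r : Z.U} (hr : r ∈ Set.range (Z.ballMin s hs)) :
    Z.ballMin s hs r = r := by
  obtain ⟨x, rfl⟩ := hr
  exact (ballMin_eq_iff hs).mpr (Z.dist_comm x _ ▸ dist_ballMin_lt hs x)

lemma ballMin_mono : Monotone (Z.ballMin s hs) := by
  intro x y hxy
  by_contra! h
  have hyx : Z.dist y x < s := by
    rcases hxy.lt_or_eq with hxy | rfl
    · exact dist_lt_of_lt_of_lt (dist_ballMin_lt hs y) (by simpa [Z.dist_self] using hs)
        (h.trans_le (ballMin_le hs x)) hxy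
    · simpa [Z.dist_self] using hs
  exact h.ne ((ballMin_eq_iff hs).mpr hyx)

namespace Emb

variable {X Y : ConvOrdUltra} {g : X.U → Y.U}

lemma of_strictMono (hd : ∀ a b, Y.dist (g a) (g b) = X.dist a b) (hg : StrictMono g) :
    Emb X Y g :=
  ⟨hg.injective, hd, fun _ _ => @hg _ _⟩

variable (hg : Emb X Y g)
include hg

lemma dist_eq (a b : X.U) : Y.dist (g a) (g b) = X.dist a b := hg.2.1 a b

lemma strictMono : StrictMono g := fun a b => hg.2.2 a b

noncomputable def ballMinMap :
    Set.range (X.ballMin s hs) ↪o Set.range (Y.ballMin s hs) :=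
  .ofStrictMono (fun r => ⟨Y.ballMin s hs (g r), Set.mem_range_self _⟩) fun r r' hrr' => by
    refine (ballMin_mono hs (hg.strictMono hrr').le).lt_of_ne fun h => hrr'.ne (Subtype.ext ?_)
    rw [← ballMin_eq_self hs r.2, ← ballMin_eq_self hs r'.2, ballMin_eq_iff, ← hg.dist_eq]
    exact (ballMin_eq_iff hs).mp h

lemma ballMinMap_rangeFactorization (x : X.U) :
    hg.ballMinMap hs (Set.rangeFactorization _ x) = Set.rangeFactorization _ (g x) := by
  refine Subtype.ext ((ballMin_eq_iff hs).mpr ?_)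
  rw [hg.dist_eq, X.dist_comm]
  exact dist_ballMin_lt hs x

end Emb

end Balls

section Grid

variable {m N : ℕ} (s : Fin m → ℝ≥0)

/-- For antitone `s`, this is `s j` for the first letter `j` at which the words differ. -/
noncomputable def gridDist (x y : Lex (Fin m → Fin N)) : ℝ≥0 :=
  (univ.filter fun j => ofLex x j ≠ ofLex y j).sup s

lemma gridDist_le_iff {x y : Lex (Fin m → Fin N)} {r : ℝ≥0} :
    gridDist s x y ≤ r ↔ ∀ j, x j ≠ y j → s j ≤ r := by
  rw [gridDist, Finset.sup_le_iff]
  exact forall_congr' fun j => by rw [Finset.mem_filter_univ]; rfl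

lemma gridDist_self (x : Lex (Fin m → Fin N)) : gridDist s x x = 0 := by
  simp [gridDist]

lemma gridDist_comm (x y : Lex (Fin m → Fin N)) : gridDist s x y = gridDist s y x := by
  simp_rw [gridDist, ne_comm]

lemma gridDist_le_max (x y z : Lex (Fin m → Fin N)) :
    gridDist s x z ≤ max (gridDist s x y) (gridDist s y z) := by
  rw [gridDist_le_iff]
  intro j hj
  by_cases hxy : x j = y j
  · exact le_max_of_le_right ((gridDist_le_iff s).mp le_rfl j (hxy ▸ hj))
  · exact le_max_of_le_left ((gridDist_le_iff s).mp le_rfl j hxy)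

lemma gridDist_eq_zero_or_exists (x y : Lex (Fin m → Fin N)) :
    gridDist s x y = 0 ∨ ∃ j, gridDist s x y = s j := by
  rcases (univ.filter fun j => ofLex x j ≠ ofLex y j).eq_empty_or_nonempty with h | h
  · left
    rw [gridDist, h, Finset.sup_empty, bot_eq_zero']
  · obtain ⟨j, -, hj⟩ := Finset.exists_mem_eq_sup _ h s
    exact Or.inr ⟨j, hj⟩

variable {s}

lemma eq_of_gridDist_eq_zero (hpos : ∀ j, 0 < s j) {x y : Lex (Fin m → Fin N)}
    (h : gridDist s x y = 0) : x = y :=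
  funext fun j => by_contra fun hj =>
    (hpos j).ne' (le_antisymm ((gridDist_le_iff s).mp h.le j hj) bot_le)

lemma gridDist_le_of_lt_of_lt (hs : StrictAnti s) {u x y z : Lex (Fin m → Fin N)} {r : ℝ≥0}
    (hx : gridDist s u x ≤ r) (hy : gridDist s u y ≤ r) (hxz : x < z) (hzy : z < y) :
    gridDist s u z ≤ r := by
  rw [gridDist_le_iff] at hx hy ⊢
  have agree {v : Lex (Fin m → Fin N)} (hv : ∀ j, u j ≠ v j → s j ≤ r) {j : Fin m}
      (hj : r < s j) : u j = v j :=
    not_not.mp fun h => (hv j h).not_gt hj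
  intro j hj
  by_contra! hrj
  have hxy : ∀ j' ≤ j, x j' = y j' := fun j' hj' =>
    have hrj' : r < s j' := hrj.trans_le (hs.antitone hj')
    (agree hx hrj').symm.trans (agree hy hrj')
  exact hj ((agree hx hrj).trans (Pi.Lex.apply_eq_of_lt_of_lt hxz hzy hxy).symm)

variable (N s) in
noncomputable def grid (hs : StrictAnti s) (hpos : ∀ j, 0 < s j) : ConvOrdUltra where
  U := Lex (Fin m → Fin N)
  finite := inferInstance
  dist x y := gridDist s x y
  dist_self x := by simp [gridDist_self]
  eq_of_dist_eq_zero x y h := eq_of_gridDist_eq_zero hpos (by exact_mod_cast h)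
  dist_comm x y := by rw [gridDist_comm]
  ultra x y z := by exact_mod_cast gridDist_le_max s x y z
  lt := (· < ·)
  lt_irrefl := _root_.lt_irrefl
  lt_trans _ _ _ := _root_.lt_trans
  lt_total := lt_trichotomy
  convex u r x y z hx hy hxz hzy := by
    have hr : 0 ≤ r := (NNReal.coe_nonneg _).trans hx
    rw [← Real.le_toNNReal_iff_coe_le hr] at hx hy ⊢
    exact gridDist_le_of_lt_of_lt hs hx hy hxz hzy

variable (hs : StrictAnti s) (hpos : ∀ j, 0 < s j)

lemma emb_grid_of_coord {Z : ConvOrdUltra} (c : Fin m → Z.U → Fin N)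
    (hmono : ∀ j, Monotone (c j)) (hc : ∀ j x y, c j x = c j y ↔ Z.dist x y < s j)
    (hZs : ∀ x y, Z.dist x y ≠ 0 → ∃ j, Z.dist x y = s j) :
    Emb Z (grid N s hs hpos) fun x => toLex fun j => c j x := by
  have separate : ∀ x y, x ≠ y → ∃ j, Z.dist x y = s j ∧ c j x ≠ c j y := fun x y hxy => by
    obtain ⟨j, hj⟩ := hZs x y fun h => hxy (Z.eq_of_dist_eq_zero x y h)
    exact ⟨j, hj, fun h => ((hc j x y).mp h).ne hj⟩
  refine .of_strictMono (fun x y => ?_) fun x y hxy => Pi.toLex_strictMono ?_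
  · change (gridDist s _ _ : ℝ) = _
    rcases eq_or_ne x y with rfl | hxy
    · exact (congrArg NNReal.toReal (gridDist_self s _)).trans (Z.dist_self x).symm
    obtain ⟨j, hj, hcj⟩ := separate x y hxy
    rw [hj, NNReal.coe_inj]
    refine le_antisymm ((gridDist_le_iff s).mpr fun j' hj' => ?_) ?_
    · exact_mod_cast hj ▸ not_lt.mp (mt (hc j' x y).mpr hj')
    · exact Finset.le_sup ((Finset.mem_filter_univ j).mpr hcj)
  · obtain ⟨j, -, hcj⟩ := separate x y hxy.ne
    exact lt_of_le_of_ne (fun j' => hmono j' hxy.le) fun h => hcj (congrFun h j)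

lemma exists_grid_ramsey (κ : Type*) [Finite κ] (X Y : ConvOrdUltra)
    (hYs : ∀ x y, Y.dist x y ≠ 0 → ∃ j, Y.dist x y = s j) :
    ∃ N, ∀ χ : (X.U → (grid N s hs hpos).U) → κ,
      ∃ w, Emb Y (grid N s hs hpos) w ∧ ∃ i, ∀ g, Emb X Y g → χ (w ∘ g) = i := by
  have hs₀ (j : Fin m) : (0 : ℝ) < s j := hpos j
  obtain ⟨N, hN⟩ := exists_pi_ramsey_orderEmbedding κ
    (fun j => Set.range (X.ballMin _ (hs₀ j))) (fun j => Set.range (Y.ballMin _ (hs₀ j)))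
  refine ⟨N, fun χ => ?_⟩
  obtain ⟨H, i, hH⟩ := hN fun h => χ fun x => toLex fun j => h j (Set.rangeFactorization _ x)
  refine ⟨_, emb_grid_of_coord hs hpos (fun j y => H j (Set.rangeFactorization _ y))
    (fun j => (H j).monotone.comp fun _ _ h => ballMin_mono (hs₀ j) h)
    (fun j x y => (H j).injective.eq_iff.trans (Subtype.ext_iff.trans (ballMin_eq_iff (hs₀ j))))
    hYs, i, fun g hg => ?_⟩
  -- `w ∘ g` is the copy of `X` spelled out by the maps that `g` induces on balls
  rw [← hH fun j => hg.ballMinMap (hs₀ j)]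
  exact congrArg χ <| funext fun x => congrArg toLex <| funext fun j =>
    congrArg (H j) (hg.ballMinMap_rangeFactorization (hs₀ j) x).symm

end Grid

lemma exists_strictAnti_enum_dist (Z : ConvOrdUltra) :
    ∃ (m : ℕ) (s : Fin m → ℝ≥0), StrictAnti s ∧ (∀ j, 0 < s j) ∧
      (∀ j, ∃ x y, Z.dist x y = s j) ∧ ∀ x y, Z.dist x y ≠ 0 → ∃ j, Z.dist x y = s j := by
  set F : Finset ℝ≥0 := (univ.image fun p : Z.U × Z.U => (Z.dist p.1 p.2).toNNReal).erase 0
  refine ⟨F.card, fun j => F.orderEmbOfFin rfl j.rev,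
    (F.orderEmbOfFin rfl).strictMono.comp_strictAnti Fin.rev_strictAnti, fun j => ?_,
    fun j => ?_, fun x y hxy => ?_⟩
  · exact pos_iff_ne_zero.mpr (mem_erase.mp (F.orderEmbOfFin_mem rfl _)).1
  · obtain ⟨⟨x, y⟩, -, hxy⟩ := mem_image.mp (mem_erase.mp (F.orderEmbOfFin_mem rfl j.rev)).2
    refine ⟨x, y, ?_⟩
    simp only at hxy ⊢
    rw [← hxy, Real.coe_toNNReal _ (Z.dist_nonneg x y)]
  · have hmem : (Z.dist x y).toNNReal ∈ (F : Set ℝ≥0) :=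
      mem_erase.mpr ⟨fun h => hxy (le_antisymm (Real.toNNReal_eq_zero.mp h) (Z.dist_nonneg x y)),
        mem_image_of_mem _ (mem_univ (x, y))⟩
    rw [← F.range_orderEmbOfFin rfl] at hmem
    obtain ⟨j, hj⟩ := hmem
    exact ⟨j.rev, by simp [hj, Real.coe_toNNReal _ (Z.dist_nonneg x y)]⟩

end ConvOrdUltra

open ConvOrdUltra

theorem convexlyOrderedUltrametric_S_ramsey_general (S : Set ℝ)
    (k : ℕ) (hk : 2 ≤ k) (X Y : ConvOrdUltra)
    (hY : ∀ a b, Y.dist a b ∈ S) :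
    ∃ W : ConvOrdUltra, (∀ a b, W.dist a b ∈ S) ∧
      ∀ χ : (X.U → W.U) → Fin k,
        ∃ w, ConvOrdUltra.Emb Y W w ∧ ∃ i : Fin k,
          ∀ g, ConvOrdUltra.Emb X Y g → χ (w ∘ g) = i := by
  rcases isEmpty_or_nonempty Y.U with hY₀ | ⟨⟨y₀⟩⟩
  · refine ⟨Y, hY, fun χ => ⟨id, .of_strictMono (fun _ _ => rfl) strictMono_id, ?_⟩⟩
    rcases isEmpty_or_nonempty X.U with hX₀ | ⟨⟨x₀⟩⟩
    · exact ⟨χ isEmptyElim, fun g _ => congrArg χ (funext isEmptyElim)⟩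
    · exact ⟨⟨0, by omega⟩, fun g _ => isEmptyElim (g x₀)⟩
  obtain ⟨m, s, hs, hpos, hsY, hYs⟩ := Y.exists_strictAnti_enum_dist
  obtain ⟨N, hN⟩ := exists_grid_ramsey hs hpos (Fin k) X Y hYs
  refine ⟨grid N s hs hpos, fun a b => ?_, hN⟩
  change (gridDist s a b : ℝ) ∈ S
  rcases gridDist_eq_zero_or_exists s a b with h | ⟨j, h⟩
  · simpa [h, Y.dist_self] using hY y₀ y₀
  · obtain ⟨x, y, hxy⟩ := hsY j
    exact h ▸ hxy ▸ hY x y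

/-- For every set `S ⊆ ℝ` of nonnegative reals, the class of all finite convexly ordered
ultrametric spaces with all realized distances in `S` has the Ramsey property. -/
theorem convexlyOrderedUltrametric_S_ramsey (S : Set ℝ) (hS : ∀ x ∈ S, 0 ≤ x)
    (k : ℕ) (hk : 2 ≤ k) (X Y : ConvOrdUltra)
    (hX : ∀ a b, X.dist a b ∈ S) (hY : ∀ a b, Y.dist a b ∈ S)
    (hXY : ∃ f, ConvOrdUltra.Emb X Y f) :
    ∃ W : ConvOrdUltra, (∀ a b, W.dist a b ∈ S) ∧
      ∀ χ : (X.U → W.U) → Fin k,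
        ∃ w, ConvOrdUltra.Emb Y W w ∧ ∃ i : Fin k,
          ∀ g, ConvOrdUltra.Emb X Y g → χ (w ∘ g) = i :=
  convexlyOrderedUltrametric_S_ramsey_general S k hk X Y hY
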